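/- For every finite simple graph G, the sum-color cost satisfies ŝ(G) ≤ χ(G)·|V(G)|; moreover, if χ(G) ≥ 2 then the inequality is strict, i.e., ŝ(G) < χ(G)·|V(G)|. -/

import Mathlib

/-!
Painter fixes a proper coloring with `c` colors and, whenever Lister marks `M`, colors the
largest color class inside `M`. By pigeonhole that class `X` has `|M| ≤ c · |X|`, so each round
scores at most `c` per vertex it removes, and `ŝ(G) ≤ c · |V(G)|`. In the round that removes the
last vertices, `M = X`, so that round scores `|X| < c · |X|` once `c ≥ 2`: the bound is strict.
-/

open Finset SimpleGraph

/-- Auxiliary fuelled recursion for the slow-coloring game value.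
`slowAux G n S` computes the value of the slow-coloring game on the
subgraph of `G` induced by the set `S` of (uncolored) vertices, provided
`n ≥ S.card`. -/
noncomputable def slowAux {V : Type*} [DecidableEq V] (G : SimpleGraph V) :
    ℕ → Finset V → ℕ
  | 0, _ => 0
  | n + 1, S =>
      (S.powerset.filter fun M => M.Nonempty).sup fun M =>
        M.card + sInf {k : ℕ | ∃ X : Finset V, X ⊆ M ∧ X.Nonempty ∧
          (∀ x ∈ X, ∀ y ∈ X, ¬ G.Adj x y) ∧ k = slowAux G n (S \ X)}

/-- The sum-color cost `ŝ(G[S])` of the subgraph of `G` induced by the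
vertex set `S`. -/
noncomputable def slowCost {V : Type*} [DecidableEq V] (G : SimpleGraph V)
    (S : Finset V) : ℕ :=
  slowAux G S.card S

lemma SimpleGraph.Coloring.exists_indep_subset_card_le_mul {V α : Type*} [Fintype α]
    {G : SimpleGraph V} (f : G.Coloring α) {M : Finset V} (hM : M.Nonempty) :
    ∃ X ⊆ M, X.Nonempty ∧ (∀ x ∈ X, ∀ y ∈ X, ¬ G.Adj x y) ∧ #M ≤ Fintype.card α * #X := by
  classical
  obtain ⟨v, hv⟩ := hM
  have : Nonempty α := ⟨f v⟩
  have hα : 0 < (Fintype.card α : ℚ) := by exact_mod_cast Fintype.card_pos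
  obtain ⟨i, -, hi⟩ := exists_le_card_fiber_of_nsmul_le_card_of_maps_to
    (fun x _ => mem_univ (f x)) univ_nonempty (b := (#M : ℚ) / Fintype.card α)
    (by rw [card_univ, nsmul_eq_mul, mul_div_cancel₀ _ hα.ne'])
  have hM_le : #M ≤ Fintype.card α * #{x ∈ M | f x = i} := by
    rw [div_le_iff₀ hα] at hi
    exact_mod_cast hi.trans_eq (mul_comm _ _)
  refine ⟨_, filter_subset _ _, ?_, ?_, hM_le⟩
  · rw [← card_pos]
    exact Nat.pos_of_mul_pos_left ((card_pos.2 ⟨v, hv⟩).trans_le hM_le)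
  · intro x hx y hy hxy
    exact f.valid hxy ((mem_filter.1 hx).2.trans (mem_filter.1 hy).2.symm)

section SlowColoring

variable {V : Type*} [DecidableEq V] {G : SimpleGraph V}

lemma slowAux_empty (G : SimpleGraph V) : ∀ n, slowAux G n ∅ = 0
  | 0 => rfl
  | n + 1 => by simp [slowAux]

lemma slowAux_succ_le {n B : ℕ} {S : Finset V}
    (h : ∀ M ⊆ S, M.Nonempty → ∃ X ⊆ M, X.Nonempty ∧ (∀ x ∈ X, ∀ y ∈ X, ¬ G.Adj x y) ∧
      #M + slowAux G n (S \ X) ≤ B) :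
    slowAux G (n + 1) S ≤ B := by
  rw [slowAux]
  refine Finset.sup_le fun M hM => ?_
  rw [mem_filter, mem_powerset] at hM
  obtain ⟨X, hXM, hXne, hXind, hB⟩ := h M hM.1 hM.2
  exact (Nat.add_le_add_left (Nat.sInf_le (by exact ⟨X, hXM, hXne, hXind, rfl⟩)) _).trans hB

lemma slowAux_le_mul {α : Type*} [Fintype α] (f : G.Coloring α) :
    ∀ n (S : Finset V), #S ≤ n → slowAux G n S ≤ Fintype.card α * #S
  | 0, S, _ => by simp [slowAux]
  | n + 1, S, hS => slowAux_succ_le fun M hMS hM => by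
      obtain ⟨X, hXM, hXne, hXind, hMX⟩ := f.exists_indep_subset_card_le_mul hM
      have hsplit := card_sdiff_add_card_eq_card (hXM.trans hMS)
      have ih := slowAux_le_mul f n (S \ X) (by have := hXne.card_pos; omega)
      refine ⟨X, hXM, hXne, hXind, ?_⟩
      calc #M + slowAux G n (S \ X) ≤ Fintype.card α * #X + Fintype.card α * #(S \ X) :=
            add_le_add hMX ih
        _ = Fintype.card α * #S := by rw [← mul_add, add_comm, hsplit]

lemma slowAux_lt_mul {α : Type*} [Fintype α] (hα : 2 ≤ Fintype.card α) (f : G.Coloring α) :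
    ∀ n (S : Finset V), #S ≤ n → S.Nonempty → slowAux G n S < Fintype.card α * #S
  | 0, S, hS, hS_ne => absurd hS (Nat.not_le_of_gt hS_ne.card_pos)
  | n + 1, S, hS, hS_ne => by
      have hS_double : 2 * #S ≤ Fintype.card α * #S := Nat.mul_le_mul_right _ hα
      have hS_pos := hS_ne.card_pos
      refine Nat.lt_of_le_sub_one (by omega) (slowAux_succ_le fun M hMS hM => ?_)
      obtain ⟨X, hXM, hXne, hXind, hMX⟩ := f.exists_indep_subset_card_le_mul hM
      refine ⟨X, hXM, hXne, hXind, ?_⟩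
      have hsplit := card_sdiff_add_card_eq_card (hXM.trans hMS)
      rcases (S \ X).eq_empty_or_nonempty with hSX | hSX
      · rw [hSX, slowAux_empty]
        have := card_le_card hMS
        omega
      · have ih := slowAux_lt_mul hα f n (S \ X) (by have := hXne.card_pos; omega) hSX
        have : Fintype.card α * #(S \ X) + Fintype.card α * #X = Fintype.card α * #S := by
          rw [← mul_add, hsplit]
        omega

lemma slowCost_le_mul {α : Type*} [Fintype α] (f : G.Coloring α) (S : Finset V) :
    slowCost G S ≤ Fintype.card α * #S :=
  slowAux_le_mul f _ S le_rfl

lemma slowCost_lt_mul {α : Type*} [Fintype α] (hα : 2 ≤ Fintype.card α) (f : G.Coloring α)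
    {S : Finset V} (hS : S.Nonempty) : slowCost G S < Fintype.card α * #S :=
  slowAux_lt_mul hα f _ S le_rfl hS

end SlowColoring

theorem stmt_19 {V : Type*} [Fintype V] [DecidableEq V] (G : SimpleGraph V) :
    (slowCost G Finset.univ : ℕ∞) ≤
        G.chromaticNumber * (Fintype.card V : ℕ∞) ∧
      (2 ≤ G.chromaticNumber →
        (slowCost G Finset.univ : ℕ∞) <
          G.chromaticNumber * (Fintype.card V : ℕ∞)) := by
  obtain ⟨c, hc⟩ := ENat.ne_top_iff_exists.1
    (G.chromaticNumber_le_card.trans_lt (ENat.natCast_lt_top _)).ne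
  obtain ⟨f⟩ : G.Colorable c := chromaticNumber_le_iff_colorable.1 hc.ge
  rw [← hc, ← card_univ, ← Nat.cast_mul, Nat.cast_le, Nat.cast_lt]
  refine ⟨by simpa using slowCost_le_mul f univ, fun h2 => ?_⟩
  have hc2 : 2 ≤ c := by exact_mod_cast h2
  have : Nonempty V := not_isEmpty_iff.1 fun _ => by
    rw [chromaticNumber_eq_zero_of_isEmpty, Nat.cast_eq_zero] at hc
    omega
  simpa using slowCost_lt_mul (by simpa using hc2) f univ_nonempty
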